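/- Let p be an odd prime with Pisano period l_p = p−1 and β(p) = 2, and let C = ⟨f(x)⟩ be the cyclic code of parameters [p−1, 2, p−3] over F_p generated by the Fibonacci polynomial f(x) (coordinates indexed 0, 1, …, p−2). Then C has exactly (p−3)/2 minimal codewords; coordinate (p−1)/2 belongs to the support of every minimal codeword of C; and each coordinate i with 1 ≤ i ≤ p−2 and i ≠ (p−1)/2 belongs to the support of exactly (p−5)/2 of the minimal codewords of C. -/

import Mathlib

open Polynomial

/-- The Fibonacci sequence over `ZMod p`: `F 0 = 0`, `F 1 = 1`, `F (n+2) = F (n+1) + F n`. -/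
def fibMod (p : ℕ) : ℕ → ZMod p
  | 0 => 0
  | 1 => 1
  | n + 2 => fibMod p (n + 1) + fibMod p n

/-- The Pisano period of `p`: the least `t > 0` with `F t = F 0 = 0` and `F (t+1) = F 1 = 1`. -/
noncomputable def pisano (p : ℕ) : ℕ :=
  sInf {t : ℕ | 0 < t ∧ fibMod p t = 0 ∧ fibMod p (t + 1) = 1}

/-- `β(p)`: the number of indices `0 ≤ i < l_p` with `F i = 0` in `ZMod p`. -/
noncomputable def betaP (p : ℕ) : ℕ :=
  ((Finset.range (pisano p)).filter fun i => fibMod p i = 0).card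

/-- The Fibonacci polynomial `f(x) = ∑_{i=0}^{l_p - 1} F_i x^i` over `ZMod p`. -/
noncomputable def fibPoly (p : ℕ) : (ZMod p)[X] :=
  ∑ i ∈ Finset.range (pisano p), C (fibMod p i) * X ^ i

/-- Cyclic shift of a vector of length `l`: the shift `v ↦ (v_{l-1}, v_0, …, v_{l-2})`,
which corresponds to multiplication by `x` modulo `x^l - 1` on coefficient vectors. -/
def cyclicShift (p l : ℕ) (v : Fin l → ZMod p) : Fin l → ZMod p :=
  fun i => v ⟨((i : ℕ) + (l - 1)) % l, Nat.mod_lt _ i.pos⟩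

/-- The coefficient vector of length `l` of a polynomial. -/
def polyVec (p l : ℕ) (g : (ZMod p)[X]) : Fin l → ZMod p := fun i => g.coeff i

/-- The cyclic code of length `l` generated by `g`: the ideal generated by the image of `g`
in `F_p[x]/(x^l - 1)`, identified with the subspace of `F_p^l` of coefficient vectors via
`a_0 + a_1 x + ⋯ + a_{l-1} x^{l-1} ↦ (a_0, …, a_{l-1})`; equivalently (since multiplication
by `x` is the cyclic shift), the `F_p`-span of all cyclic shifts of the coefficient vector
of `g`. -/
noncomputable def cyclicCode (p l : ℕ) (g : (ZMod p)[X]) :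
    Submodule (ZMod p) (Fin l → ZMod p) :=
  Submodule.span (ZMod p) {w | ∃ k : ℕ, w = (cyclicShift p l)^[k] (polyVec p l g)}

/-- The cyclic code of length `l` generated by the Fibonacci polynomial `f(x)`. -/
noncomputable def fibCode (p l : ℕ) : Submodule (ZMod p) (Fin l → ZMod p) :=
  cyclicCode p l (fibPoly p)

/-- A minimal codeword of a code `Cc ⊆ F_p^l`: a nonzero codeword `c` with first coordinate
`c 0 = 1` such that every codeword of `Cc` whose support is contained in `supp(c)` is a
scalar multiple of `c`. -/
def IsMinimalCodeword (p l : ℕ) (Cc : Submodule (ZMod p) (Fin l → ZMod p))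
    (c : Fin l → ZMod p) : Prop :=
  c ∈ Cc ∧ c ≠ 0 ∧ (∀ h : 0 < l, c ⟨0, h⟩ = 1) ∧
    ∀ v ∈ Cc, (∀ i, v i ≠ 0 → c i ≠ 0) → ∃ k : ZMod p, v = k • c

/-!
Codewords of `⟨f⟩` are the restrictions to one period of the sequences with
`s (n + 2) = s (n + 1) + s n`, a plane parametrised by `(s 0, s 1)`. A codeword with `c 0 = 1`
is minimal iff it has a zero, and it is determined by any one of its zeros. If `0` and `z` are
the only zeros of `F` in a period `l`, then `l = 2 z` and every such sequence satisfies
`s (n + z) = -s n`, while two zeros of a nonzero `s` differ by a zero of `F`. So the zeros of a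
minimal codeword in `[0, l)` are exactly `j` and `j + z` for a single `j ∈ (0, z)`, which
parametrises the minimal codewords bijectively: coordinate `z` is a zero of none of them, and
every other nonzero coordinate is a zero of exactly one.
-/

namespace FibonacciCode

def IsFibLike {R : Type*} [Add R] (s : ℕ → R) : Prop :=
  ∀ n, s (n + 2) = s (n + 1) + s n

section General

variable {R : Type*} {s t : ℕ → R}

theorem IsFibLike.ext [Add R] (hs : IsFibLike s) (ht : IsFibLike t) (h0 : s 0 = t 0)
    (h1 : s 1 = t 1) : s = t := by
  funext n
  induction n using Nat.twoStepInduction with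
  | zero => exact h0
  | one => exact h1
  | more n hn hn1 => rw [hs, ht, hn, hn1]

theorem IsFibLike.comp_add_left [Add R] (hs : IsFibLike s) (k : ℕ) :
    IsFibLike fun n => s (k + n) :=
  fun n => hs (k + n)

theorem IsFibLike.eq_zero_of_consecutive_zeros [AddGroup R] (hs : IsFibLike s) :
    ∀ i, s i = 0 → s (i + 1) = 0 → s = 0
  | 0, h0, h1 => hs.ext (fun _ => (add_zero 0).symm) h0 h1
  | i + 1, h1, h2 => hs.eq_zero_of_consecutive_zeros i (by simpa [h1, h2] using (hs i).symm) h1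

end General

variable {p : ℕ}

@[simp] theorem fibMod_zero : fibMod p 0 = 0 := rfl

@[simp] theorem fibMod_one : fibMod p 1 = 1 := rfl

theorem isFibLike_fibMod : IsFibLike (fibMod p) := fun _ => rfl

/-- `fibPrev p n` is `F (n - 1)`, with the convention `F (-1) = 1`. -/
def fibPrev (p n : ℕ) : ZMod p := fibMod p (n + 1) - fibMod p n

def fibComb (a b : ZMod p) (n : ℕ) : ZMod p := a * fibPrev p n + b * fibMod p n

@[simp] theorem fibComb_zero (a b : ZMod p) : fibComb a b 0 = a := by
  simp [fibComb, fibPrev]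

@[simp] theorem fibComb_one (a b : ZMod p) : fibComb a b 1 = b := by
  simp [fibComb, fibPrev, isFibLike_fibMod 0]

theorem isFibLike_fibComb (a b : ZMod p) : IsFibLike (fibComb a b) := fun n => by
  simp only [fibComb, fibPrev, isFibLike_fibMod (n + 1), isFibLike_fibMod n]
  ring

theorem IsFibLike.eq_fibComb {s : ℕ → ZMod p} (hs : IsFibLike s) : s = fibComb (s 0) (s 1) :=
  hs.ext (isFibLike_fibComb _ _) (fibComb_zero _ _).symm (fibComb_one _ _).symm

theorem IsFibLike.add_eq {s : ℕ → ZMod p} (hs : IsFibLike s) (n m : ℕ) :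
    s (n + m) = s n * fibPrev p m + s (n + 1) * fibMod p m :=
  congrFun (hs.comp_add_left n).eq_fibComb m

theorem IsFibLike.periodic {s : ℕ → ZMod p} (hs : IsFibLike s) {l : ℕ} (h0 : fibMod p l = 0)
    (h1 : fibMod p (l + 1) = 1) : Function.Periodic s l := fun n => by
  rw [hs.add_eq, fibPrev, h0, h1]
  ring

theorem IsFibLike.antiperiodic {s : ℕ → ZMod p} (hs : IsFibLike s) {z : ℕ}
    (hz : Function.Antiperiodic (fibMod p) z) : Function.Antiperiodic s z := fun n => by
  have h1 : fibMod p (z + 1) = -1 := by rw [add_comm, hz, fibMod_one]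
  rw [hs.add_eq, fibPrev, h1, hz.eq]
  simp

theorem fibMod_ne_zero_or_succ_ne_zero [Nontrivial (ZMod p)] (i : ℕ) :
    fibMod p i ≠ 0 ∨ fibMod p (i + 1) ≠ 0 := by
  by_contra! h
  exact one_ne_zero (congrFun (isFibLike_fibMod.eq_zero_of_consecutive_zeros i h.1 h.2) 1)

theorem IsFibLike.fibMod_eq_zero_of_eq_zero_of_add_eq_zero [Fact p.Prime] {s : ℕ → ZMod p}
    (hs : IsFibLike s) (hs0 : s ≠ 0) {i d : ℕ} (hi : s i = 0) (hid : s (i + d) = 0) :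
    fibMod p d = 0 := by
  have hsucc : s (i + 1) ≠ 0 := fun h => hs0 (hs.eq_zero_of_consecutive_zeros i hi h)
  rw [hs.add_eq, hi, zero_mul, zero_add] at hid
  exact (mul_eq_zero.mp hid).resolve_left hsucc

theorem fibMod_pisano (h : 0 < pisano p) :
    fibMod p (pisano p) = 0 ∧ fibMod p (pisano p + 1) = 1 :=
  (Nat.sInf_mem (Nat.nonempty_of_pos_sInf h)).2

theorem fibMod_succ_ne_one_of_lt_pisano {t : ℕ} (ht : 0 < t) (htl : t < pisano p)
    (hFt : fibMod p t = 0) : fibMod p (t + 1) ≠ 1 :=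
  fun h => Nat.notMem_of_lt_sInf htl ⟨ht, hFt, h⟩

theorem exists_fibMod_zeros_eq_pair (hb : betaP p = 2) (hpos : 0 < pisano p) :
    ∃ z, 0 < z ∧ z < pisano p ∧ fibMod p z = 0 ∧
      ∀ d < pisano p, fibMod p d = 0 → d = 0 ∨ d = z := by
  obtain ⟨x, y, hxy, hzeros⟩ := Finset.card_eq_two.mp hb
  have hmem (d : ℕ) : d < pisano p ∧ fibMod p d = 0 ↔ d = x ∨ d = y := by
    simpa using Finset.ext_iff.mp hzeros d
  rcases (hmem 0).mp ⟨hpos, rfl⟩ with rfl | rfl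
  · obtain ⟨hy, hFy⟩ := (hmem y).mpr (.inr rfl)
    exact ⟨y, by omega, hy, hFy, fun d hd hFd => (hmem d).mp ⟨hd, hFd⟩⟩
  · obtain ⟨hx, hFx⟩ := (hmem x).mpr (.inl rfl)
    exact ⟨x, by omega, hx, hFx, fun d hd hFd => ((hmem d).mp ⟨hd, hFd⟩).symm⟩

theorem two_mul_eq_and_antiperiodic_fibMod [Fact p.Prime] {l z : ℕ} (h0 : fibMod p l = 0)
    (h1 : fibMod p (l + 1) = 1) (hz : 0 < z) (hzl : z < l) (hFz : fibMod p z = 0)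
    (hnot : fibMod p (z + 1) ≠ 1) (hzeros : ∀ d < l, fibMod p d = 0 → d = 0 ∨ d = z) :
    l = 2 * z ∧ Function.Antiperiodic (fibMod p) z := by
  have hF : fibMod p ≠ 0 := fun h => one_ne_zero (congrFun h 1)
  have hlz : l = 2 * z := by
    have : fibMod p (l - z) = 0 :=
      isFibLike_fibMod.fibMod_eq_zero_of_eq_zero_of_add_eq_zero hF hFz
        (by rwa [Nat.add_sub_cancel' hzl.le])
    rcases hzeros (l - z) (by omega) this with h | h <;> omega
  have hsq : fibMod p (z + 1) * fibMod p (z + 1) = 1 := by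
    have := isFibLike_fibMod.add_eq (p := p) z (z + 1)
    rwa [show z + (z + 1) = l + 1 by omega, h1, hFz, zero_mul, zero_add, eq_comm] at this
  -- `F (z + 1) = 1` would make `z` a period
  have hneg : fibMod p (z + 1) = -1 := (mul_self_eq_one_iff.mp hsq).resolve_left hnot
  refine ⟨hlz, fun n => ?_⟩
  rw [isFibLike_fibMod.add_eq, fibPrev, hneg, hFz]
  ring

section Code

variable {l : ℕ}

theorem polyVec_fibPoly (hl : pisano p = l) :
    polyVec p l (fibPoly p) = fun i : Fin l => fibMod p i := by
  funext i
  simp [polyVec, fibPoly, hl]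

theorem cyclicShift_eq_of_periodic {s : ℕ → ZMod p} (hs : Function.Periodic s l) :
    cyclicShift p l (fun i => s i) = fun i : Fin l => s (i + (l - 1)) :=
  funext fun _ => hs.map_mod_nat _

theorem cyclicShift_fibComb (h0 : fibMod p l = 0) (h1 : fibMod p (l + 1) = 1) (a b : ZMod p) :
    cyclicShift p l (fun i => fibComb a b i) = fun i : Fin l => fibComb (b - a) a i := by
  have hs := isFibLike_fibComb a b
  rw [cyclicShift_eq_of_periodic (hs.periodic h0 h1)]
  funext i
  have hl : 0 < l := i.pos
  have hsucc : fibComb a b (l - 1 + 1) = a := by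
    rw [Nat.sub_add_cancel hl, ← zero_add l, hs.periodic h0 h1, fibComb_zero]
  have hpred : fibComb a b (l - 1) = b - a := by
    have := hs (l - 1)
    rw [hsucc, show l - 1 + 2 = 1 + l by omega, hs.periodic h0 h1, fibComb_one] at this
    linear_combination -this
  rw [add_comm (i : ℕ), congrFun ((hs.comp_add_left (l - 1)).eq_fibComb) i, add_zero, hpred, hsucc]

theorem mem_fibCode_iff (hl : pisano p = l) (hl0 : 0 < l) {c : Fin l → ZMod p} :
    c ∈ fibCode p l ↔ ∃ a b, c = fun i : Fin l => fibComb a b i := by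
  obtain ⟨h0, h1⟩ := hl ▸ fibMod_pisano (hl ▸ hl0)
  have hgen : polyVec p l (fibPoly p) = fun i : Fin l => fibComb 0 1 i := by
    rw [polyVec_fibPoly hl, isFibLike_fibMod.eq_fibComb, fibMod_zero, fibMod_one]
  constructor
  · intro hc
    induction hc using Submodule.span_induction with
    | mem x hx =>
      obtain ⟨k, rfl⟩ := hx
      induction k with
      | zero => exact ⟨0, 1, hgen⟩
      | succ k ih =>
        obtain ⟨a, b, hab⟩ := ih
        exact ⟨b - a, a, by rw [Function.iterate_succ_apply', hab, cyclicShift_fibComb h0 h1]⟩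
    | zero => exact ⟨0, 0, funext fun i => by simp [fibComb]⟩
    | add x y _ _ hx hy =>
      obtain ⟨⟨a, b, rfl⟩, ⟨a', b', rfl⟩⟩ := And.intro hx hy
      exact ⟨a + a', b + b', funext fun i => by simp only [fibComb, Pi.add_apply]; ring⟩
    | smul r x _ hx =>
      obtain ⟨a, b, rfl⟩ := hx
      exact ⟨r * a, r * b, funext fun i => by simp only [fibComb, Pi.smul_apply, smul_eq_mul]; ring⟩
  · rintro ⟨a, b, rfl⟩
    have hshift : cyclicShift p l (polyVec p l (fibPoly p)) = fun i : Fin l => fibComb 1 0 i := by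
      rw [hgen, cyclicShift_fibComb h0 h1, sub_zero]
    have hdecomp : (fun i : Fin l => fibComb a b i) =
        a • cyclicShift p l (polyVec p l (fibPoly p)) + b • polyVec p l (fibPoly p) := by
      rw [hshift, hgen]
      funext i
      simp only [fibComb, Pi.add_apply, Pi.smul_apply, smul_eq_mul]
      ring
    rw [hdecomp]
    exact add_mem (Submodule.smul_mem _ _ (Submodule.subset_span ⟨1, rfl⟩))
      (Submodule.smul_mem _ _ (Submodule.subset_span ⟨0, rfl⟩))

/-- The Fibonacci-like sequence starting with `1` that vanishes at `j` (when `F j ≠ 0`). -/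
def vanishingAt (p j : ℕ) : ℕ → ZMod p := fibComb (1 : ZMod p) (-fibPrev p j * (fibMod p j)⁻¹)

theorem isFibLike_vanishingAt (j : ℕ) : IsFibLike (vanishingAt p j) := isFibLike_fibComb _ _

theorem fibComb_one_eq_zero_iff [Fact p.Prime] {b : ZMod p} {i : ℕ} :
    fibComb 1 b i = 0 ↔ fibMod p i ≠ 0 ∧ fibComb 1 b = vanishingAt p i := by
  constructor
  · intro h
    have hF : fibMod p i ≠ 0 := by
      intro hF
      refine (fibMod_ne_zero_or_succ_ne_zero i).resolve_left (not_not.mpr hF) ?_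
      simpa [fibComb, fibPrev, hF] using h
    refine ⟨hF, congrArg _ ?_⟩
    rw [fibComb] at h
    rw [eq_mul_inv_iff_mul_eq₀ hF]
    linear_combination h
  · rintro ⟨hF, h⟩
    rw [h, vanishingAt, fibComb, inv_mul_cancel_right₀ hF]
    ring

theorem isMinimalCodeword_fibCode_iff [Fact p.Prime] (hl : pisano p = l) (hl2 : 2 ≤ l)
    {c : Fin l → ZMod p} : IsMinimalCodeword p l (fibCode p l) c ↔
      ∃ i < l, fibMod p i ≠ 0 ∧ c = fun k : Fin l => vanishingAt p i k := by
  have hmem := @mem_fibCode_iff p l hl (by omega)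
  constructor
  · rintro ⟨hc, -, hc0, hmin⟩
    obtain ⟨a, b, rfl⟩ := hmem.mp hc
    obtain rfl : a = 1 := by simpa using hc0 (by omega)
    -- otherwise the support of `c` would contain that of `F`, which is not proportional to `c`
    obtain ⟨i, hi⟩ : ∃ i : Fin l, fibComb 1 b i = 0 := by
      by_contra! h
      obtain ⟨k, hk⟩ := hmin _ (hmem.mpr ⟨0, 1, rfl⟩) fun i _ => h i
      have hk0 := congrFun hk ⟨0, by omega⟩
      have hk1 := congrFun hk ⟨1, by omega⟩
      simp only [fibComb_zero, fibComb_one, Pi.smul_apply, smul_eq_mul, mul_one] at hk0 hk1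
      simp [← hk0] at hk1
    obtain ⟨hF, hb⟩ := fibComb_one_eq_zero_iff.mp hi
    exact ⟨i, i.isLt, hF, by rw [← hb]⟩
  · rintro ⟨i, hi, hF, rfl⟩
    have hvi : vanishingAt p i i = 0 := fibComb_one_eq_zero_iff.mpr ⟨hF, rfl⟩
    refine ⟨hmem.mpr ⟨1, _, rfl⟩, fun h => ?_, fun _ => fibComb_zero _ _, ?_⟩
    · simpa [vanishingAt] using congrFun h ⟨0, by omega⟩
    rintro v hv hsupp
    obtain ⟨a, b, rfl⟩ := hmem.mp hv
    have hvi' : fibComb a b i = 0 := by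
      by_contra h
      exact hsupp ⟨i, hi⟩ h hvi
    refine ⟨a, funext fun k => ?_⟩
    have hb : b = a * (-fibPrev p i * (fibMod p i)⁻¹) := by
      rw [fibComb] at hvi'
      rw [← mul_assoc, eq_mul_inv_iff_mul_eq₀ hF]
      linear_combination hvi'
    simp only [Pi.smul_apply, smul_eq_mul, vanishingAt, fibComb, hb]
    ring

end Code

theorem exists_mem_Ioo_eq_or_eq_add {i z : ℕ} (hi0 : i ≠ 0) (hiz : i ≠ z) (hi : i < 2 * z) :
    ∃ r ∈ Set.Ioo 0 z, i = r ∨ i = r + z := by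
  rcases lt_or_ge i z with h | h
  · exact ⟨i, ⟨by omega, h⟩, .inl rfl⟩
  · exact ⟨i - z, ⟨by omega, by omega⟩, .inr (by omega)⟩

theorem fibMod_ne_zero_of_mem_Ioo {z : ℕ} (hzeros : ∀ d < 2 * z, fibMod p d = 0 → d = 0 ∨ d = z)
    {j : ℕ} (hj : j ∈ Set.Ioo 0 z) : fibMod p j ≠ 0 := fun h => by
  obtain ⟨hj0, hjz⟩ := hj
  rcases hzeros j (by omega) h with h | h <;> omega

section HalfPeriod

variable [Fact p.Prime] {l z : ℕ}

theorem vanishingAt_eq_zero_iff (hz : Function.Antiperiodic (fibMod p) z)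
    (hzeros : ∀ d < 2 * z, fibMod p d = 0 → d = 0 ∨ d = z) {j i : ℕ} (hj : j ∈ Set.Ioo 0 z)
    (hi : i < 2 * z) : vanishingAt p j i = 0 ↔ i = j ∨ i = j + z := by
  have hs := isFibLike_vanishingAt (p := p) j
  have hvj : vanishingAt p j j = 0 :=
    fibComb_one_eq_zero_iff.mpr ⟨fibMod_ne_zero_of_mem_Ioo hzeros hj, rfl⟩
  obtain ⟨hj0, hjz⟩ := hj
  constructor
  · intro hvi
    have hs0 : vanishingAt p j ≠ 0 := fun h => by simpa [vanishingAt] using congrFun h 0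
    rcases le_total j i with hji | hij
    · have := hs.fibMod_eq_zero_of_eq_zero_of_add_eq_zero hs0 hvj (d := i - j)
        (by rwa [Nat.add_sub_cancel' hji])
      rcases hzeros (i - j) (by omega) this with h | h <;> omega
    · have := hs.fibMod_eq_zero_of_eq_zero_of_add_eq_zero hs0 hvi (d := j - i)
        (by rwa [Nat.add_sub_cancel' hij])
      rcases hzeros (j - i) (by omega) this with h | h <;> omega
  · rintro (rfl | rfl)
    · exact hvj
    · rw [hs.antiperiodic hz, hvj, neg_zero]

theorem setOf_isMinimalCodeword_eq_image (hl : pisano p = l) (hlz : l = 2 * z) (hz0 : 0 < z)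
    (hz : Function.Antiperiodic (fibMod p) z)
    (hzeros : ∀ d < 2 * z, fibMod p d = 0 → d = 0 ∨ d = z) :
    {c | IsMinimalCodeword p l (fibCode p l) c} =
      (fun j (k : Fin l) => vanishingAt p j k) '' Set.Ioo 0 z := by
  ext c
  simp only [Set.mem_ofPred_eq, Set.mem_image, isMinimalCodeword_fibCode_iff hl (by omega)]
  constructor
  · rintro ⟨i, hi, hF, rfl⟩
    have hiz : i ≠ z := by rintro rfl; simp [hz.eq] at hF
    obtain ⟨r, hr, hir⟩ := exists_mem_Ioo_eq_or_eq_add (by rintro rfl; simp at hF) hiz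
      (hlz ▸ hi)
    have hvr : vanishingAt p i r = 0 := by
      have hvi : vanishingAt p i i = 0 := fibComb_one_eq_zero_iff.mpr ⟨hF, rfl⟩
      rcases hir with rfl | rfl
      · exact hvi
      · rwa [(isFibLike_vanishingAt _).antiperiodic hz, neg_eq_zero] at hvi
    exact ⟨r, hr, by rw [← (fibComb_one_eq_zero_iff.mp hvr).2]; rfl⟩
  · rintro ⟨j, hj, rfl⟩
    exact ⟨j, by grind, fibMod_ne_zero_of_mem_Ioo hzeros hj, rfl⟩

theorem injOn_vanishingAt (hlz : l = 2 * z) (hz : Function.Antiperiodic (fibMod p) z)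
    (hzeros : ∀ d < 2 * z, fibMod p d = 0 → d = 0 ∨ d = z) :
    Set.InjOn (fun j (k : Fin l) => vanishingAt p j k) (Set.Ioo 0 z) := by
  intro j hj k hk h
  have hjk : vanishingAt p j j = vanishingAt p k j := congrFun h ⟨j, by grind⟩
  have hkj : vanishingAt p k j = 0 := by
    rw [← hjk]
    exact (vanishingAt_eq_zero_iff hz hzeros hj (by grind)).mpr (.inl rfl)
  have := (vanishingAt_eq_zero_iff hz hzeros hk (by grind)).mp hkj
  grind

theorem setOf_isMinimalCodeword_and_ne_zero_eq_image (hl : pisano p = l) (hlz : l = 2 * z)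
    (hz0 : 0 < z) (hz : Function.Antiperiodic (fibMod p) z)
    (hzeros : ∀ d < 2 * z, fibMod p d = 0 → d = 0 ∨ d = z) {i : Fin l} {r : ℕ}
    (hr : r ∈ Set.Ioo 0 z) (hir : (i : ℕ) = r ∨ (i : ℕ) = r + z) :
    {c | IsMinimalCodeword p l (fibCode p l) c ∧ c i ≠ 0} =
      (fun j (k : Fin l) => vanishingAt p j k) '' (Set.Ioo 0 z \ {r}) := by
  have hvanish (j : ℕ) (hj : j ∈ Set.Ioo 0 z) : vanishingAt p j i = 0 ↔ j = r := by
    rw [vanishingAt_eq_zero_iff hz hzeros hj (hlz ▸ i.isLt)]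
    grind
  ext c
  have hmin := Set.ext_iff.mp (setOf_isMinimalCodeword_eq_image hl hlz hz0 hz hzeros) c
  rw [Set.mem_ofPred_eq] at hmin ⊢
  rw [hmin]
  constructor
  · rintro ⟨⟨j, hj, rfl⟩, hne⟩
    exact ⟨j, ⟨hj, fun h => hne ((hvanish j hj).mpr h)⟩, rfl⟩
  · rintro ⟨j, ⟨hj, hjr⟩, rfl⟩
    exact ⟨⟨j, hj, rfl⟩, fun h => hjr ((hvanish j hj).mp h)⟩

end HalfPeriod

end FibonacciCode

open FibonacciCode in
theorem fibCode_minimal_codewords_beta_two_general (p : ℕ) [Fact p.Prime]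
    (hl : pisano p = p - 1) (hb : betaP p = 2) :
    Set.ncard {c | IsMinimalCodeword p (p - 1) (fibCode p (p - 1)) c} = (p - 3) / 2 ∧
      (∀ i : Fin (p - 1), (i : ℕ) = (p - 1) / 2 →
        ∀ c, IsMinimalCodeword p (p - 1) (fibCode p (p - 1)) c → c i ≠ 0) ∧
      ∀ i : Fin (p - 1), 1 ≤ (i : ℕ) → (i : ℕ) ≠ (p - 1) / 2 →
        Set.ncard {c | IsMinimalCodeword p (p - 1) (fibCode p (p - 1)) c ∧ c i ≠ 0}
          = (p - 5) / 2 := by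
  have hpos : 0 < pisano p := by have := (Fact.out : p.Prime).two_le; omega
  obtain ⟨z, hz0, hzl, hFz, hzeros⟩ := exists_fibMod_zeros_eq_pair hb hpos
  obtain ⟨h0, h1⟩ := fibMod_pisano hpos
  obtain ⟨hlz, hz⟩ := two_mul_eq_and_antiperiodic_fibMod h0 h1 hz0 hzl hFz
    (fibMod_succ_ne_one_of_lt_pisano hz0 hzl hFz) hzeros
  rw [hl] at hlz
  rw [hl, hlz] at hzeros
  have hhalf : (p - 1) / 2 = z := by omega
  have hmin := setOf_isMinimalCodeword_eq_image hl hlz hz0 hz hzeros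
  have hinj := injOn_vanishingAt hlz hz hzeros
  refine ⟨?_, ?_, ?_⟩
  · rw [hmin, hinj.ncard_image, Set.ncard_Ioo_nat]
    omega
  · rintro i hi c hc
    obtain ⟨j, hj, rfl⟩ := hmin.subset hc
    rw [ne_eq, vanishingAt_eq_zero_iff hz hzeros hj (hlz ▸ i.isLt)]
    grind
  · intro i hi1 hiz
    rw [hhalf] at hiz
    obtain ⟨r, hr, hir⟩ := exists_mem_Ioo_eq_or_eq_add (by omega) hiz (by omega)
    rw [setOf_isMinimalCodeword_and_ne_zero_eq_image hl hlz hz0 hz hzeros hr hir,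
      (hinj.mono Set.sdiff_subset).ncard_image, Set.ncard_sdiff_singleton_of_mem hr,
      Set.ncard_Ioo_nat]
    omega

/-- For an odd prime `p` with `l_p = p - 1` and `β(p) = 2`, the
`[p-1, 2, p-3]` cyclic code `C = ⟨f(x)⟩` has exactly `(p-3)/2` minimal codewords;
coordinate `(p-1)/2` lies in the support of every minimal codeword (a dictatorial
participant); and every other coordinate `i` with `1 ≤ i ≤ p - 2`, `i ≠ (p-1)/2`, lies in
the support of exactly `(p-5)/2` of them. -/
theorem fibCode_minimal_codewords_beta_two (p : ℕ) [Fact p.Prime] (hodd : Odd p)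
    (hl : pisano p = p - 1) (hb : betaP p = 2) :
    Set.ncard {c | IsMinimalCodeword p (p - 1) (fibCode p (p - 1)) c} = (p - 3) / 2 ∧
      (∀ i : Fin (p - 1), (i : ℕ) = (p - 1) / 2 →
        ∀ c, IsMinimalCodeword p (p - 1) (fibCode p (p - 1)) c → c i ≠ 0) ∧
      ∀ i : Fin (p - 1), 1 ≤ (i : ℕ) → (i : ℕ) ≠ (p - 1) / 2 →
        Set.ncard {c | IsMinimalCodeword p (p - 1) (fibCode p (p - 1)) c ∧ c i ≠ 0}
          = (p - 5) / 2 :=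
  fibCode_minimal_codewords_beta_two_general p hl hb
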